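/- arXiv:2308.08727 — 2 statements merged into one kernel-verified Lean document; each statement's English description precedes it below -/
import Mathlib

section
/- Let C be a symmetric positive definite n×n real matrix, R a symmetric positive definite m×m real matrix, H an m×n real matrix, and let a, b ≥ 0 be real constants. For σ > 0 define the weights l_C(σ) = exp(−a/(2σ²)) and l_R(σ) = exp(−b/(2σ²)), and the MC-EnKF gain K̃(σ) = (l_C(σ)·C⁻¹ + l_R(σ)·Hᵀ R⁻¹ H)⁻¹ Hᵀ (l_R(σ)·R⁻¹). Then as σ → ∞, K̃(σ) converges (entrywise) to the EnKF gain K = C Hᵀ (H C Hᵀ + R)⁻¹. -/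
/-!
When σ → ∞ both weights tend to 1, and at weights (1, 1) the MC-EnKF gain is the information form
(C⁻¹ + HᵀR⁻¹H)⁻¹HᵀR⁻¹ of the Kalman gain. It equals C Hᵀ (HCHᵀ + R)⁻¹ by the push-through identity
(C⁻¹ + HᵀR⁻¹H) C Hᵀ = HᵀR⁻¹ (HCHᵀ + R). As C⁻¹ + HᵀR⁻¹H is positive definite, hence invertible,
and matrix inversion is continuous at invertible matrices, the gain depends continuously on the
weights near (1, 1).
-/

open Matrix Filter Topology

namespace Matrix

variable {ι κ : Type*} [Fintype ι] [Fintype κ]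

theorem inv_add_mul_inv_mul_mul_mul_inv [DecidableEq ι] [DecidableEq κ]
    {𝕜 : Type*} [CommRing 𝕜]
    {C : Matrix ι ι 𝕜} {R : Matrix κ κ 𝕜} (B : Matrix ι κ 𝕜) (H : Matrix κ ι 𝕜)
    (hC : IsUnit C.det) (hR : IsUnit R.det) (hM : IsUnit (C⁻¹ + B * R⁻¹ * H).det)
    (hS : IsUnit (H * C * B + R).det) :
    (C⁻¹ + B * R⁻¹ * H)⁻¹ * B * R⁻¹ = C * B * (H * C * B + R)⁻¹ := by
  set M := C⁻¹ + B * R⁻¹ * H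
  set S := H * C * B + R
  have hpush : M * (C * B) = B * R⁻¹ * S := by
    simp only [M, S, Matrix.add_mul, Matrix.mul_add, ← Matrix.mul_assoc, nonsing_inv_mul C hC,
      Matrix.one_mul, Matrix.mul_assoc B R⁻¹ R, nonsing_inv_mul R hR, Matrix.mul_one, add_comm]
  calc M⁻¹ * B * R⁻¹ = M⁻¹ * (B * R⁻¹ * S) * S⁻¹ := by
        simp only [Matrix.mul_assoc, mul_nonsing_inv S hS, Matrix.mul_one]
    _ = C * B * S⁻¹ := by rw [← hpush, ← Matrix.mul_assoc, nonsing_inv_mul M hM, Matrix.one_mul]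

theorem PosDef.inv_add_transpose_mul_mul [DecidableEq ι] [DecidableEq κ]
    {C : Matrix ι ι ℝ} {R : Matrix κ κ ℝ} (hC : C.PosDef) (hR : R.PosDef) (H : Matrix κ ι ℝ) :
    (C⁻¹ + Hᵀ * R⁻¹ * H).PosDef :=
  hC.inv.add_posSemidef <| by
    simpa [conjTranspose_eq_transpose_of_trivial] using
      hR.inv.posSemidef.conjTranspose_mul_mul_same H

theorem PosSemidef.mul_mul_transpose_add_posDef {C : Matrix ι ι ℝ} {R : Matrix κ κ ℝ}
    (hC : C.PosSemidef) (hR : R.PosDef) (H : Matrix κ ι ℝ) : (H * C * Hᵀ + R).PosDef :=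
  PosDef.posSemidef_add (by
    simpa [conjTranspose_eq_transpose_of_trivial] using hC.mul_mul_conjTranspose_same H) hR

theorem continuousAt_smul_add_smul_inv_mul_mul_smul [DecidableEq ι] {𝕜 : Type*} [Field 𝕜]
    [TopologicalSpace 𝕜] [IsTopologicalDivisionRing 𝕜]
    {A A' : Matrix ι ι 𝕜} (G : Matrix ι κ 𝕜) (Q : Matrix κ κ 𝕜) (h : IsUnit (A + A').det) :
    ContinuousAt (fun w : 𝕜 × 𝕜 => (w.1 • A + w.2 • A')⁻¹ * G * (w.2 • Q)) (1, 1) := by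
  have hinv : ContinuousAt Inv.inv (A + A') :=
    continuousAt_matrix_inv _ (by simpa [Ring.inverse_eq_inv'] using continuousAt_inv₀ h.ne_zero)
  have hsum : Continuous fun w : 𝕜 × 𝕜 => w.1 • A + w.2 • A' := by fun_prop
  have hmul : Continuous fun p : Matrix ι ι 𝕜 × 𝕜 => p.1 * G * (p.2 • Q) :=
    (continuous_fst.matrix_mul continuous_const).matrix_mul (continuous_snd.smul continuous_const)
  have hsum_inv : ContinuousAt (fun w : 𝕜 × 𝕜 => (w.1 • A + w.2 • A')⁻¹) (1, 1) :=
    hinv.comp_of_eq hsum.continuousAt (by simp)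
  exact hmul.continuousAt.comp (f := fun w : 𝕜 × 𝕜 => ((w.1 • A + w.2 • A')⁻¹, w.2))
    (hsum_inv.prodMk continuousAt_snd)

end Matrix

theorem tendsto_exp_neg_div_two_mul_sq_atTop (c : ℝ) :
    Tendsto (fun σ : ℝ => Real.exp (-c / (2 * σ ^ 2))) atTop (𝓝 1) := by
  have hsq : Tendsto (fun σ : ℝ => 2 * σ ^ 2) atTop atTop :=
    (tendsto_pow_atTop two_ne_zero).const_mul_atTop two_pos
  simpa [Function.comp_def] using
    (Real.continuous_exp.tendsto 0).comp (tendsto_const_nhds.div_atTop hsq)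

theorem stmt_7_general {n m : ℕ}
    (C : Matrix (Fin n) (Fin n) ℝ) (R : Matrix (Fin m) (Fin m) ℝ)
    (H : Matrix (Fin m) (Fin n) ℝ)
    (hC : C.PosDef) (hR : R.PosDef)
    (a b : ℝ) :
    Tendsto
      (fun σ : ℝ =>
        (Real.exp (-a / (2 * σ ^ 2)) • C⁻¹
            + Real.exp (-b / (2 * σ ^ 2)) • (Hᵀ * R⁻¹ * H))⁻¹
          * Hᵀ * (Real.exp (-b / (2 * σ ^ 2)) • R⁻¹))
      atTop (𝓝 (C * Hᵀ * (H * C * Hᵀ + R)⁻¹)) := by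
  have hM := (hC.inv_add_transpose_mul_mul hR H).det_pos.ne'.isUnit
  have hS := (hC.posSemidef.mul_mul_transpose_add_posDef hR H).det_pos.ne'.isUnit
  rw [← inv_add_mul_inv_mul_mul_mul_inv Hᵀ H hC.det_pos.ne'.isUnit hR.det_pos.ne'.isUnit hM hS]
  have hweights := (tendsto_exp_neg_div_two_mul_sq_atTop a).prodMk_nhds
    (tendsto_exp_neg_div_two_mul_sq_atTop b)
  simpa [Function.comp_def] using
    (continuousAt_smul_add_smul_inv_mul_mul_smul Hᵀ R⁻¹ hM).tendsto.comp hweights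

/-- Theorem 1 of the paper: the MC-EnKF gain
`K̃(σ) = (l_C(σ) C⁻¹ + l_R(σ) Hᵀ R⁻¹ H)⁻¹ Hᵀ (l_R(σ) R⁻¹)` with
`l_C(σ) = exp(−a/(2σ²))`, `l_R(σ) = exp(−b/(2σ²))` converges entrywise to the
EnKF gain `K = C Hᵀ (H C Hᵀ + R)⁻¹` as `σ → ∞`. -/
theorem stmt_7 {n m : ℕ}
    (C : Matrix (Fin n) (Fin n) ℝ) (R : Matrix (Fin m) (Fin m) ℝ)
    (H : Matrix (Fin m) (Fin n) ℝ)
    (hC : C.PosDef) (hR : R.PosDef)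
    (a b : ℝ) (ha : 0 ≤ a) (hb : 0 ≤ b) :
    Tendsto
      (fun σ : ℝ =>
        (Real.exp (-a / (2 * σ ^ 2)) • C⁻¹
            + Real.exp (-b / (2 * σ ^ 2)) • (Hᵀ * R⁻¹ * H))⁻¹
          * Hᵀ * (Real.exp (-b / (2 * σ ^ 2)) • R⁻¹))
      atTop (𝓝 (C * Hᵀ * (H * C * Hᵀ + R)⁻¹)) :=
  stmt_7_general C R H hC hR a b
end

section
/- Let P be a symmetric positive definite n×n real matrix, R a symmetric positive definite m×m real matrix, H an m×n real matrix, m ∈ ℝⁿ and y ∈ ℝᵐ. Then the quadratic cost L(x) = (y − Hx)ᵀ R⁻¹ (y − Hx) + (x − m)ᵀ P⁻¹ (x − m) attains its unique global minimum at x* = m + K (y − H m), where K = P Hᵀ (H P Hᵀ + R)⁻¹. -/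
/-!
Expanding `L` around `x* = m + K (y − H m)` gives
`L (x* + d) = L x* + 2 dᵀ (P⁻¹ (x* − m) − Hᵀ R⁻¹ (y − H x*)) + ‖H d‖²_R + ‖d‖²_P`.
The Kalman gain is exactly what makes the linear term vanish: both `P⁻¹ K` and
`Hᵀ R⁻¹ (1 − H K)` equal `Hᵀ (H P Hᵀ + R)⁻¹`. The remaining quadratic term is positive
for `d ≠ 0` because `P⁻¹` is positive definite and `R⁻¹` positive semidefinite.
-/

open Matrix

namespace Matrix

section Quadratic

variable {ι κ α : Type*} [Fintype ι] [Fintype κ] [CommRing α]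

lemma IsSymm.dotProduct_mulVec_comm {A : Matrix ι ι α} (hA : A.IsSymm) (u v : ι → α) :
    u ⬝ᵥ (A *ᵥ v) = v ⬝ᵥ (A *ᵥ u) := by
  rw [dotProduct_mulVec, ← mulVec_transpose, hA.eq, dotProduct_comm]

lemma mulVec_dotProduct_eq_dotProduct_transpose_mulVec (H : Matrix κ ι α) (d : ι → α)
    (w : κ → α) : (H *ᵥ d) ⬝ᵥ w = d ⬝ᵥ (Hᵀ *ᵥ w) := by
  rw [dotProduct_comm, dotProduct_mulVec, ← mulVec_transpose, dotProduct_comm]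

lemma IsSymm.add_dotProduct_mulVec_add {A : Matrix ι ι α} (hA : A.IsSymm) (u v : ι → α) :
    (u + v) ⬝ᵥ (A *ᵥ (u + v)) =
      u ⬝ᵥ (A *ᵥ u) + 2 * (v ⬝ᵥ (A *ᵥ u)) + v ⬝ᵥ (A *ᵥ v) := by
  simp only [mulVec_add, dotProduct_add, add_dotProduct, hA.dotProduct_mulVec_comm u v]
  ring

lemma IsSymm.sub_dotProduct_mulVec_sub {A : Matrix ι ι α} (hA : A.IsSymm) (u v : ι → α) :
    (u - v) ⬝ᵥ (A *ᵥ (u - v)) =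
      u ⬝ᵥ (A *ᵥ u) - 2 * (v ⬝ᵥ (A *ᵥ u)) + v ⬝ᵥ (A *ᵥ v) := by
  simp only [mulVec_sub, dotProduct_sub, sub_dotProduct, hA.dotProduct_mulVec_comm u v]
  ring

end Quadratic

end Matrix

section LeastSquares

variable {ι κ α : Type*} [Fintype ι] [Fintype κ] [CommRing α]

/-- `A` and `B` stand for the inverted weights `R⁻¹` and `P⁻¹` of the paper's norms. -/
def leastSquaresCost (A : Matrix κ κ α) (B : Matrix ι ι α) (H : Matrix κ ι α)
    (y : κ → α) (m : ι → α) (x : ι → α) : α :=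
  (y - H *ᵥ x) ⬝ᵥ (A *ᵥ (y - H *ᵥ x)) + (x - m) ⬝ᵥ (B *ᵥ (x - m))

lemma leastSquaresCost_add_of_stationary {A : Matrix κ κ α} {B : Matrix ι ι α}
    (hA : A.IsSymm) (hB : B.IsSymm) (H : Matrix κ ι α) (y : κ → α) (m x₀ d : ι → α)
    (hx₀ : B *ᵥ (x₀ - m) = Hᵀ *ᵥ (A *ᵥ (y - H *ᵥ x₀))) :
    leastSquaresCost A B H y m (x₀ + d) =
      leastSquaresCost A B H y m x₀ +
        ((H *ᵥ d) ⬝ᵥ (A *ᵥ (H *ᵥ d)) + d ⬝ᵥ (B *ᵥ d)) := by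
  have hcross : (H *ᵥ d) ⬝ᵥ (A *ᵥ (y - H *ᵥ x₀)) = d ⬝ᵥ (B *ᵥ (x₀ - m)) := by
    rw [mulVec_dotProduct_eq_dotProduct_transpose_mulVec, hx₀]
  have hres : y - H *ᵥ (x₀ + d) = (y - H *ᵥ x₀) - H *ᵥ d := by
    rw [mulVec_add, sub_add_eq_sub_sub]
  have hdev : x₀ + d - m = (x₀ - m) + d := add_sub_right_comm x₀ d m
  rw [leastSquaresCost, leastSquaresCost, hres, hdev, hA.sub_dotProduct_mulVec_sub,
    hB.add_dotProduct_mulVec_add, hcross]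
  ring

end LeastSquares

section KalmanGain

variable {ι κ α : Type*} [Fintype ι] [Fintype κ] [DecidableEq κ] [Field α]

noncomputable def kalmanGain (P : Matrix ι ι α) (R : Matrix κ κ α) (H : Matrix κ ι α) :
    Matrix ι κ α :=
  P * Hᵀ * (H * P * Hᵀ + R)⁻¹

lemma inv_mul_kalmanGain [DecidableEq ι] {P : Matrix ι ι α} (hP : IsUnit P.det)
    (R : Matrix κ κ α) (H : Matrix κ ι α) :
    P⁻¹ * kalmanGain P R H = Hᵀ * (H * P * Hᵀ + R)⁻¹ := by
  rw [kalmanGain, Matrix.mul_assoc, ← Matrix.mul_assoc P⁻¹, nonsing_inv_mul _ hP,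
    Matrix.one_mul]

lemma transpose_mul_inv_mul_one_sub_mul_kalmanGain (P : Matrix ι ι α) {R : Matrix κ κ α}
    (H : Matrix κ ι α) (hR : IsUnit R.det) (hS : IsUnit (H * P * Hᵀ + R).det) :
    Hᵀ * R⁻¹ * (1 - H * kalmanGain P R H) = Hᵀ * (H * P * Hᵀ + R)⁻¹ := by
  have hresidual : 1 - H * kalmanGain P R H = R * (H * P * Hᵀ + R)⁻¹ := by
    calc 1 - H * kalmanGain P R H
        = (H * P * Hᵀ + R) * (H * P * Hᵀ + R)⁻¹ -
            H * P * Hᵀ * (H * P * Hᵀ + R)⁻¹ := by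
          rw [mul_nonsing_inv _ hS, kalmanGain, Matrix.mul_assoc, Matrix.mul_assoc,
            Matrix.mul_assoc, Matrix.mul_assoc]
      _ = R * (H * P * Hᵀ + R)⁻¹ := by rw [← Matrix.sub_mul, add_sub_cancel_left]
  rw [hresidual, Matrix.mul_assoc, ← Matrix.mul_assoc R⁻¹, nonsing_inv_mul _ hR,
    Matrix.one_mul]

noncomputable def kalmanUpdate (P : Matrix ι ι α) (R : Matrix κ κ α) (H : Matrix κ ι α)
    (m : ι → α) (y : κ → α) : ι → α :=
  m + kalmanGain P R H *ᵥ (y - H *ᵥ m)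

lemma inv_mulVec_kalmanUpdate_sub [DecidableEq ι] {P : Matrix ι ι α} {R : Matrix κ κ α}
    (H : Matrix κ ι α) (hP : IsUnit P.det) (hR : IsUnit R.det)
    (hS : IsUnit (H * P * Hᵀ + R).det) (m : ι → α) (y : κ → α) :
    P⁻¹ *ᵥ (kalmanUpdate P R H m y - m) =
      Hᵀ *ᵥ (R⁻¹ *ᵥ (y - H *ᵥ kalmanUpdate P R H m y)) := by
  have hres : y - H *ᵥ kalmanUpdate P R H m y =
      (1 - H * kalmanGain P R H) *ᵥ (y - H *ᵥ m) := by
    simp only [kalmanUpdate, mulVec_add, sub_mulVec, one_mulVec, mulVec_mulVec]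
    abel
  rw [hres, mulVec_mulVec, mulVec_mulVec,
    transpose_mul_inv_mul_one_sub_mul_kalmanGain P H hR hS, kalmanUpdate,
    add_sub_cancel_left, mulVec_mulVec, inv_mul_kalmanGain hP]

end KalmanGain

/-- The least-squares cost `L(x) = ‖y − Hx‖²_R + ‖x − m‖²_P` attains its unique
global minimum at `x* = m + K (y − H m)` with Kalman gain `K = P Hᵀ (H P Hᵀ + R)⁻¹`. -/
theorem stmt_12 {n m : ℕ}
    (P : Matrix (Fin n) (Fin n) ℝ) (R : Matrix (Fin m) (Fin m) ℝ)
    (H : Matrix (Fin m) (Fin n) ℝ)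
    (hP : P.PosDef) (hR : R.PosDef)
    (mv : Fin n → ℝ) (y : Fin m → ℝ) :
    let L : (Fin n → ℝ) → ℝ := fun x =>
      (y - H *ᵥ x) ⬝ᵥ (R⁻¹ *ᵥ (y - H *ᵥ x)) + (x - mv) ⬝ᵥ (P⁻¹ *ᵥ (x - mv))
    let K : Matrix (Fin n) (Fin m) ℝ := P * Hᵀ * (H * P * Hᵀ + R)⁻¹
    let xstar : Fin n → ℝ := mv + K *ᵥ (y - H *ᵥ mv)
    ∀ x : Fin n → ℝ, x ≠ xstar → L xstar < L x := by
  intro L K xstar x hx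
  have hHPH : (H * P * Hᵀ).PosSemidef := by
    simpa using hP.posSemidef.mul_mul_conjTranspose_same H
  have hS : (H * P * Hᵀ + R).PosDef := Matrix.PosDef.posSemidef_add hHPH hR
  have hstat := inv_mulVec_kalmanUpdate_sub H hP.det_pos.ne'.isUnit hR.det_pos.ne'.isUnit
    hS.det_pos.ne'.isUnit mv y
  obtain ⟨d, hd, rfl⟩ : ∃ d ≠ 0, x = xstar + d :=
    ⟨x - xstar, sub_ne_zero.mpr hx, (add_sub_cancel xstar x).symm⟩
  change leastSquaresCost R⁻¹ P⁻¹ H y mv xstar <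
    leastSquaresCost R⁻¹ P⁻¹ H y mv (xstar + d)
  rw [leastSquaresCost_add_of_stationary (isHermitian_iff_isSymm.mp hR.inv.isHermitian)
    (isHermitian_iff_isSymm.mp hP.inv.isHermitian) H y mv xstar d hstat]
  have hfit := hR.inv.posSemidef.dotProduct_mulVec_nonneg (H *ᵥ d)
  have hprior := hP.inv.dotProduct_mulVec_pos hd
  simp only [star_trivial] at hfit hprior
  linarith
end
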